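/- arXiv:math/0505264 — 4 statements merged into one kernel-verified Lean document; each statement's English description precedes it below -/
import Mathlib

section
/- Let f : Δ → Δ be a holomorphic self-map of the open unit disc such that f(z) = z + o(|z-1|³) as z → 1 in Δ (i.e. (f(z) - z)/|z-1|³ → 0 as z tends to 1 with z ∈ Δ). Then f(z) = z for every z ∈ Δ. -/
/-!
Write `C w = (1 + w) / (1 - w)` for the Cayley transform, so that `Re C w = (1 - |w|²) / |1 - w|²`.
Since `f r = r + o((1 - r)³)` on the radius, `(1 - f r) / (1 - r) → 1`, and Julia's lemma
(Schwarz–Pick at `w = r`, letting `r → 1`) gives `Re C (f z) ≥ Re C z`. Hence `g = C ∘ f - C` has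
nonnegative real part, and the cubic error term gives `g r = o(1 - r)`. By Harnack's inequality
`Re g r ≥ Re g 0 · (1 - r²) / 4`, so `Re g 0 = 0`; the real part of `g` then attains its minimum
at `0`, so `g` is constant, and its radial limit forces `g = 0`.
-/

open Metric Filter Complex ComplexConjugate Set Topology

lemma mem_ball_zero_one_iff_normSq_lt_one {z : ℂ} : z ∈ ball (0 : ℂ) 1 ↔ normSq z < 1 := by
  rw [mem_ball_zero_iff, normSq_eq_norm_sq, sq_lt_one_iff₀ (norm_nonneg z)]

lemma one_sub_ne_zero_of_mem_ball {z : ℂ} (hz : z ∈ ball (0 : ℂ) 1) : 1 - z ≠ 0 :=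
  sub_ne_zero.2 fun h => by simp [← h] at hz

noncomputable def mobius (b z : ℂ) : ℂ := (z - b) / (1 - conj b * z)

lemma normSq_one_sub_conj_mul_sub_normSq_sub (b z : ℂ) :
    normSq (1 - conj b * z) - normSq (z - b) = (1 - normSq z) * (1 - normSq b) := by
  simp only [normSq_apply, sub_re, sub_im, mul_re, mul_im, one_re, one_im, conj_re, conj_im]
  ring

lemma one_sub_conj_mul_ne_zero {b z : ℂ} (hb : b ∈ ball (0 : ℂ) 1)
    (hz : z ∈ ball (0 : ℂ) 1) :
    1 - conj b * z ≠ 0 := by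
  rw [mem_ball_zero_iff] at hb hz
  have : ‖conj b * z‖ < 1 := by
    rw [norm_mul, RCLike.norm_conj]
    nlinarith [norm_nonneg b, norm_nonneg z]
  intro h
  rw [← sub_eq_zero.1 h, norm_one] at this
  exact this.false

lemma one_sub_normSq_mobius {b z : ℂ} (h : 1 - conj b * z ≠ 0) :
    1 - normSq (mobius b z) = (1 - normSq z) * (1 - normSq b) / normSq (1 - conj b * z) := by
  rw [mobius, normSq_div, ← normSq_one_sub_conj_mul_sub_normSq_sub, sub_div,
    div_self (normSq_pos.2 h).ne']

lemma mobius_mem_ball {b z : ℂ} (hb : b ∈ ball (0 : ℂ) 1) (hz : z ∈ ball (0 : ℂ) 1) :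
    mobius b z ∈ ball (0 : ℂ) 1 := by
  have hpos : 0 < 1 - normSq (mobius b z) := by
    have hd := normSq_pos.2 (one_sub_conj_mul_ne_zero hb hz)
    rw [one_sub_normSq_mobius (one_sub_conj_mul_ne_zero hb hz)]
    rw [mem_ball_zero_one_iff_normSq_lt_one] at hb hz
    have := mul_pos (sub_pos.2 hz) (sub_pos.2 hb)
    positivity
  rw [mem_ball_zero_one_iff_normSq_lt_one]
  linarith

lemma mobius_self (b : ℂ) : mobius b b = 0 := by simp [mobius]

lemma mobius_neg_zero (b : ℂ) : mobius (-b) 0 = b := by simp [mobius]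

lemma mobius_neg_mobius {b z : ℂ} (hb : b ∈ ball (0 : ℂ) 1) (hz : z ∈ ball (0 : ℂ) 1) :
    mobius (-b) (mobius b z) = z := by
  have hd := one_sub_conj_mul_ne_zero hb hz
  have hb' : -b ∈ ball (0 : ℂ) 1 := by simpa using hb
  have hd' := one_sub_conj_mul_ne_zero hb' (mobius_mem_ball hb hz)
  simp only [mobius, map_neg] at hd' ⊢
  rw [div_eq_iff hd']
  field_simp at hd' ⊢
  ring

lemma differentiableOn_mobius {b : ℂ} (hb : b ∈ ball (0 : ℂ) 1) :
    DifferentiableOn ℂ (mobius b) (ball 0 1) :=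
  (differentiableOn_id.sub_const b).div ((differentiableOn_const 1).sub
    (differentiableOn_id.const_mul _)) fun _ hz => one_sub_conj_mul_ne_zero hb hz

lemma mapsTo_mobius {b : ℂ} (hb : b ∈ ball (0 : ℂ) 1) :
    MapsTo (mobius b) (ball 0 1) (ball 0 1) := fun _ hz => mobius_mem_ball hb hz

section SchwarzPick

variable {f : ℂ → ℂ} (hf : DifferentiableOn ℂ f (ball 0 1))
  (hmap : MapsTo f (ball 0 1) (ball 0 1)) {z w : ℂ} (hz : z ∈ ball (0 : ℂ) 1)
  (hw : w ∈ ball (0 : ℂ) 1)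
include hf hmap hz hw

theorem norm_mobius_le_norm_mobius : ‖mobius (f w) (f z)‖ ≤ ‖mobius w z‖ := by
  have hw' : -w ∈ ball (0 : ℂ) 1 := by simpa using hw
  let F := mobius (f w) ∘ f ∘ mobius (-w)
  have hFmap : MapsTo F (ball 0 1) (ball 0 1) :=
    (mapsTo_mobius (hmap hw)).comp (hmap.comp (mapsTo_mobius hw'))
  have hF : DifferentiableOn ℂ F (ball 0 1) :=
    (differentiableOn_mobius (hmap hw)).comp (hf.comp (differentiableOn_mobius hw')
      (mapsTo_mobius hw')) (hmap.comp (mapsTo_mobius hw'))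
  have hF0 : F 0 = 0 := by simp [F, mobius_neg_zero, mobius_self]
  have := norm_le_norm_of_mapsTo_ball hF (hFmap.mono_right ball_subset_closedBall) hF0
    (mem_ball_zero_iff.1 (mobius_mem_ball hw hz))
  simpa [F, mobius_neg_mobius hw hz] using this

theorem schwarz_pick :
    (1 - normSq z) * (1 - normSq w) / normSq (1 - conj w * z) ≤
      (1 - normSq (f z)) * (1 - normSq (f w)) / normSq (1 - conj (f w) * f z) := by
  rw [← one_sub_normSq_mobius (one_sub_conj_mul_ne_zero hw hz),
    ← one_sub_normSq_mobius (one_sub_conj_mul_ne_zero (hmap hw) (hmap hz)),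
    sub_le_sub_iff_left, normSq_eq_norm_sq, normSq_eq_norm_sq]
  gcongr
  exact norm_mobius_le_norm_mobius hf hmap hz hw

end SchwarzPick

lemma tendsto_ofReal_nhdsLT_one :
    Tendsto (fun r : ℝ => (r : ℂ)) (𝓝[<] 1) (𝓝[ball 0 1] 1) := by
  refine tendsto_nhdsWithin_iff.2 ⟨?_, ?_⟩
  · simpa using (continuous_ofReal.tendsto (1 : ℝ)).mono_left nhdsWithin_le_nhds
  · filter_upwards [Ioo_mem_nhdsLT (show (-1 : ℝ) < 1 by norm_num)] with r hr
    simpa [abs_lt] using hr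

lemma tendsto_div_one_sub_pow_nhdsLT_one {F : ℂ → ℂ} {n : ℕ}
    (h : Tendsto (fun z : ℂ => F z / (‖z - 1‖ : ℂ) ^ n) (𝓝[ball 0 1] 1) (𝓝 0)) :
    Tendsto (fun r : ℝ => F r / (1 - (r : ℂ)) ^ n) (𝓝[<] 1) (𝓝 0) := by
  refine (h.comp tendsto_ofReal_nhdsLT_one).congr' ?_
  filter_upwards [self_mem_nhdsWithin] with r hr1
  rw [Function.comp_apply, ← ofReal_one, ← ofReal_sub, norm_real, Real.norm_of_nonpos
    (sub_nonpos.2 (le_of_lt hr1)), neg_sub, ofReal_sub, ofReal_one]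

lemma tendsto_one_sub_nhdsLT_one : Tendsto (fun r : ℝ => 1 - r) (𝓝[<] 1) (𝓝 0) := by
  have : Tendsto (fun r : ℝ => 1 - r) (𝓝 1) (𝓝 (1 - 1)) := tendsto_const_nhds.sub tendsto_id
  exact (sub_self (1 : ℝ) ▸ this).mono_left nhdsWithin_le_nhds

lemma tendsto_one_sub_ofReal_nhdsLT_one :
    Tendsto (fun r : ℝ => 1 - (r : ℂ)) (𝓝[<] 1) (𝓝 0) := by
  simpa [Function.comp_def] using (continuous_ofReal.tendsto 0).comp tendsto_one_sub_nhdsLT_one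

lemma one_sub_ofReal_ne_zero {r : ℝ} (hr : r < 1) : 1 - (r : ℂ) ≠ 0 := by
  exact_mod_cast (sub_pos.2 hr).ne'

lemma one_sub_normSq_le (u : ℂ) : 1 - normSq u ≤ (1 + ‖u‖) * ‖1 - u‖ := by
  have := norm_sub_norm_le (1 : ℂ) u
  rw [norm_one] at this
  rw [normSq_eq_norm_sq]
  nlinarith [norm_nonneg u]

lemma schwarz_pick_ofReal_div_one_sub {f : ℂ → ℂ} (hf : DifferentiableOn ℂ f (ball 0 1))
    (hmap : MapsTo f (ball 0 1) (ball 0 1)) {z : ℂ} (hz : z ∈ ball (0 : ℂ) 1) {r : ℝ}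
    (hr : r ∈ Ioo (-1) 1) :
    (1 - normSq z) * (1 + r) / normSq (1 - r * z) ≤
      (1 - normSq (f z)) * ((1 + ‖f r‖) * (‖1 - f r‖ / (1 - r))) /
        normSq (1 - conj (f r) * f z) := by
  have hrb : (r : ℂ) ∈ ball (0 : ℂ) 1 := by simpa [abs_lt] using hr
  have h1r : 0 < 1 - r := sub_pos.2 hr.2
  have hsp := schwarz_pick hf hmap hz hrb
  rw [conj_ofReal, normSq_ofReal] at hsp
  have hfz : 0 ≤ 1 - normSq (f z) :=
    (sub_pos.2 (mem_ball_zero_one_iff_normSq_lt_one.1 (hmap hz))).le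
  calc (1 - normSq z) * (1 + r) / normSq (1 - r * z)
      = (1 - normSq z) * (1 - r * r) / normSq (1 - r * z) / (1 - r) := by
        field_simp
        ring
    _ ≤ (1 - normSq (f z)) * (1 - normSq (f r)) / normSq (1 - conj (f r) * f z) / (1 - r) := by
        gcongr
    _ = (1 - normSq (f z)) * ((1 - normSq (f r)) / (1 - r)) /
          normSq (1 - conj (f r) * f z) := by ring
    _ ≤ _ := by
        gcongr _ * ?_ / _
        · exact normSq_nonneg _
        rw [← mul_div_assoc]
        gcongr
        exact one_sub_normSq_le _

theorem julia {f : ℂ → ℂ} (hf : DifferentiableOn ℂ f (ball 0 1))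
    (hmap : MapsTo f (ball 0 1) (ball 0 1)) {α : ℝ}
    (hα : Tendsto (fun r : ℝ => ‖1 - f r‖ / (1 - r)) (𝓝[<] 1) (𝓝 α))
    {z : ℂ} (hz : z ∈ ball (0 : ℂ) 1) :
    (1 - normSq z) / normSq (1 - z) ≤ α * ((1 - normSq (f z)) / normSq (1 - f z)) := by
  have hf1 : Tendsto (fun r : ℝ => f r) (𝓝[<] 1) (𝓝 1) := by
    rw [tendsto_iff_norm_sub_tendsto_zero]
    refine (mul_zero α ▸ hα.mul tendsto_one_sub_nhdsLT_one).congr' ?_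
    filter_upwards [self_mem_nhdsWithin] with r hr1
    rw [norm_sub_rev, div_mul_cancel₀ _ (sub_pos.2 hr1).ne']
  have hz1 := (normSq_pos.2 (one_sub_ne_zero_of_mem_ball hz)).ne'
  have hfz1 := (normSq_pos.2 (one_sub_ne_zero_of_mem_ball (hmap hz))).ne'
  have hbound : ∀ᶠ r : ℝ in 𝓝[<] 1, (1 - normSq z) * (1 + r) / normSq (1 - r * z) ≤
      (1 - normSq (f z)) * ((1 + ‖f r‖) * (‖1 - f r‖ / (1 - r))) /
        normSq (1 - conj (f r) * f z) := by
    filter_upwards [Ioo_mem_nhdsLT (show (-1 : ℝ) < 1 by norm_num)] with r hr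
    exact schwarz_pick_ofReal_div_one_sub hf hmap hz hr
  have hL : Tendsto (fun r : ℝ => (1 - normSq z) * (1 + r) / normSq (1 - r * z)) (𝓝[<] 1)
      (𝓝 ((1 - normSq z) * 2 / normSq (1 - z))) := by
    have : ContinuousAt (fun r : ℝ => (1 - normSq z) * (1 + r) / normSq (1 - r * z)) 1 :=
      ContinuousAt.div (by fun_prop) (by fun_prop) (by simpa using hz1)
    convert this.tendsto.mono_left nhdsWithin_le_nhds using 2
    norm_num
  have hR : Tendsto (fun r : ℝ =>
        (1 - normSq (f z)) * ((1 + ‖f r‖) * (‖1 - f r‖ / (1 - r))) / normSq (1 - conj (f r) * f z))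
      (𝓝[<] 1)
      (𝓝 ((1 - normSq (f z)) * ((1 + ‖(1 : ℂ)‖) * α) / normSq (1 - conj 1 * f z))) :=
    (tendsto_const_nhds.mul ((tendsto_const_nhds.add hf1.norm).mul hα)).div
      ((continuous_normSq.tendsto _).comp (tendsto_const_nhds.sub
        (((continuous_conj.tendsto _).comp hf1).mul tendsto_const_nhds))) (by simpa using hfz1)
  have key := le_of_tendsto_of_tendsto hL hR hbound
  norm_num at key
  linarith [show (1 - normSq z) * 2 / normSq (1 - z) = 2 * ((1 - normSq z) / normSq (1 - z)) by
    ring, show (1 - normSq (f z)) * (2 * α) / normSq (1 - f z) =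
      2 * (α * ((1 - normSq (f z)) / normSq (1 - f z))) by ring]

noncomputable def cayley (w : ℂ) : ℂ := (1 + w) / (1 - w)

lemma re_cayley (w : ℂ) : (cayley w).re = (1 - normSq w) / normSq (1 - w) := by
  rw [cayley, div_re, ← add_div]
  congr 1
  simp only [normSq_apply, add_re, add_im, sub_re, sub_im, one_re, one_im]
  ring

lemma differentiableOn_cayley : DifferentiableOn ℂ cayley (ball 0 1) :=
  ((differentiableOn_const 1).add differentiableOn_id).div
    ((differentiableOn_const 1).sub differentiableOn_id) fun _ => one_sub_ne_zero_of_mem_ball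

lemma cayley_injOn : InjOn cayley (ball 0 1) := by
  intro u hu w hw h
  rw [cayley, cayley, div_eq_div_iff (one_sub_ne_zero_of_mem_ball hu)
    (one_sub_ne_zero_of_mem_ball hw)] at h
  linear_combination h / 2

lemma normSq_add_conj_sub_normSq_sub (u b : ℂ) :
    normSq (u + conj b) - normSq (u - b) = 4 * b.re * u.re := by
  simp only [normSq_apply, add_re, add_im, sub_re, sub_im, conj_re, conj_im]
  ring

lemma norm_sub_le_norm_add_conj {u b : ℂ} (hu : 0 ≤ u.re) (hb : 0 ≤ b.re) :
    ‖u - b‖ ≤ ‖u + conj b‖ := by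
  rw [← sq_le_sq₀ (norm_nonneg _) (norm_nonneg _), ← normSq_eq_norm_sq, ← normSq_eq_norm_sq,
    ← sub_nonneg, normSq_add_conj_sub_normSq_sub]
  positivity

lemma add_conj_ne_zero {u b : ℂ} (hu : 0 ≤ u.re) (hb : 0 < b.re) : u + conj b ≠ 0 := by
  intro h
  have := congrArg re h
  rw [add_re, conj_re, zero_re] at this
  linarith

theorem eqOn_of_isMinOn_re {g : ℂ → ℂ} {U : Set ℂ} {c : ℂ} (hU : IsPreconnected U)
    (hUo : IsOpen U) (hg : DifferentiableOn ℂ g U) (hc : c ∈ U)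
    (hmin : IsMinOn (fun z => (g z).re) U c) : EqOn g (Function.const ℂ (g c)) U := by
  set h := fun z => g z - g c
  have hre : ∀ z ∈ U, 0 ≤ (h z).re := fun z hz => by
    simpa [h] using hmin hz
  have hden : ∀ z ∈ U, h z + 1 ≠ 0 := fun z hz => by
    simpa using add_conj_ne_zero (hre z hz) (b := 1) (by simp)
  -- the Cayley map `(h - 1) / (h + 1)` takes the right half-plane into the unit disc
  have hmax : IsMaxOn (norm ∘ fun z => (h z - 1) / (h z + 1)) U c := by
    refine isMaxOn_iff.2 fun z hz => ?_
    simp only [Function.comp_apply, h, sub_self, zero_sub, zero_add, div_one,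
      norm_neg, norm_one, norm_div]
    rw [div_le_one (norm_pos_iff.2 (hden z hz))]
    simpa using norm_sub_le_norm_add_conj (hre z hz) (b := 1) (by simp)
  have hconst := eqOn_of_isPreconnected_of_isMaxOn_norm
    (f := fun z => (h z - 1) / (h z + 1)) hU hUo
    (((hg.sub_const _).sub_const 1).div ((hg.sub_const _).add_const 1) hden) hc hmax
  intro z hz
  have := hconst hz
  simp only [Function.const_apply, h, sub_self, zero_sub, zero_add, div_one] at this
  rw [div_eq_iff (hden z hz)] at this
  simp only [Function.const_apply]
  linear_combination this / 2

theorem re_mul_one_sub_sq_norm_le_of_re_nonneg {g : ℂ → ℂ}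
    (hg : DifferentiableOn ℂ g (ball 0 1)) (hre : ∀ z ∈ ball (0 : ℂ) 1, 0 ≤ (g z).re) {z : ℂ}
    (hz : z ∈ ball (0 : ℂ) 1) :
    (g 0).re * (1 - ‖z‖ ^ 2) ≤ 4 * (g z).re := by
  set b := g 0
  have h0 : (0 : ℂ) ∈ ball (0 : ℂ) 1 := mem_ball_self one_pos
  rcases (hre 0 h0).eq_or_lt with hb | hb
  · rw [← hb, zero_mul]
    linarith [hre z hz]
  have hden : ∀ w ∈ ball (0 : ℂ) 1, g w + conj b ≠ 0 := fun w hw =>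
    add_conj_ne_zero (hre w hw) hb
  have hschwarz : ‖(g z - b) / (g z + conj b)‖ ≤ ‖z‖ := by
    refine norm_le_norm_of_mapsTo_ball (f := fun w => (g w - b) / (g w + conj b))
      ((hg.sub_const b).div (hg.add_const _) hden) (fun w hw => ?_) (by simp [b])
      (mem_ball_zero_iff.1 hz)
    rw [mem_closedBall_zero_iff, norm_div, div_le_one (norm_pos_iff.2 (hden w hw))]
    exact norm_sub_le_norm_add_conj (hre w hw) hb.le
  rw [norm_div, div_le_iff₀ (norm_pos_iff.2 (hden z hz))] at hschwarz
  have hsq : normSq (g z - b) ≤ ‖z‖ ^ 2 * normSq (g z + conj b) := by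
    rw [normSq_eq_norm_sq, normSq_eq_norm_sq, ← mul_pow]
    gcongr
  have hid := normSq_add_conj_sub_normSq_sub (g z) b
  have hlow : b.re ^ 2 ≤ normSq (g z + conj b) := by
    have := re_sq_le_normSq (g z + conj b)
    rw [add_re, conj_re] at this
    nlinarith [hre z hz]
  have hz2 : 0 ≤ 1 - ‖z‖ ^ 2 := by
    nlinarith [norm_nonneg z, mem_ball_zero_iff.1 hz]
  have : b.re * (b.re * (1 - ‖z‖ ^ 2)) ≤ b.re * (4 * (g z).re) := by
    nlinarith [mul_le_mul_of_nonneg_right hlow hz2]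
  exact le_of_mul_le_mul_left this hb

theorem eqOn_zero_of_re_nonneg_of_tendsto {g : ℂ → ℂ} (hg : DifferentiableOn ℂ g (ball 0 1))
    (hre : ∀ z ∈ ball (0 : ℂ) 1, 0 ≤ (g z).re)
    (hlim : Tendsto (fun r : ℝ => g r / (1 - r)) (𝓝[<] 1) (𝓝 0)) : EqOn g 0 (ball 0 1) := by
  have h0 : (0 : ℂ) ∈ ball (0 : ℂ) 1 := mem_ball_self one_pos
  have hball := (tendsto_nhdsWithin_iff.1 tendsto_ofReal_nhdsLT_one).2
  have hre0 : (g 0).re = 0 := by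
    refine le_antisymm ?_ (hre 0 h0)
    have hle : ∀ᶠ r : ℝ in 𝓝[<] 1, (g 0).re * (1 + r) ≤ 4 * (g r / (1 - r)).re := by
      filter_upwards [self_mem_nhdsWithin, hball,
        Ioo_mem_nhdsLT (show (0 : ℝ) < 1 by norm_num)] with r hr1 hrb hr0
      have := re_mul_one_sub_sq_norm_le_of_re_nonneg hg hre hrb
      rw [norm_real, Real.norm_of_nonneg hr0.1.le] at this
      rw [← ofReal_one, ← ofReal_sub, div_ofReal_re, mul_div_assoc',
        le_div_iff₀ (sub_pos.2 hr1)]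
      linarith
    have hL : Tendsto (fun r : ℝ => (g 0).re * (1 + r)) (𝓝[<] 1) (𝓝 ((g 0).re * (1 + 1))) :=
      ((continuous_const.mul (continuous_const.add continuous_id)).tendsto 1).mono_left
        nhdsWithin_le_nhds
    have hR := ((continuous_re.tendsto 0).comp hlim).const_mul 4
    have := le_of_tendsto_of_tendsto hL hR hle
    simp only [zero_re, mul_zero] at this
    linarith
  have hconst : EqOn g (Function.const ℂ (g 0)) (ball 0 1) :=
    eqOn_of_isMinOn_re (convex_ball 0 1).isPreconnected isOpen_ball hg h0
      (isMinOn_iff.2 fun z hz => hre0 ▸ hre z hz)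
  have hg0 : g 0 = 0 := by
    have hlim' : Tendsto (fun r : ℝ => g r) (𝓝[<] 1) (𝓝 0) := by
      refine (mul_zero (0 : ℂ) ▸ hlim.mul tendsto_one_sub_ofReal_nhdsLT_one).congr' ?_
      filter_upwards [self_mem_nhdsWithin] with r hr1
      exact div_mul_cancel₀ _ (one_sub_ofReal_ne_zero hr1)
    refine tendsto_nhds_unique (tendsto_const_nhds.congr' ?_) hlim'
    filter_upwards [hball] with r hr using (hconst hr).symm
  intro z hz
  simpa [hg0] using hconst hz

section Radial

variable {f : ℂ → ℂ}
  (hq : Tendsto (fun r : ℝ => (f r - r) / (1 - (r : ℂ)) ^ 3) (𝓝[<] 1) (𝓝 0))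
include hq

lemma tendsto_one_sub_div_one_sub :
    Tendsto (fun r : ℝ => (1 - f r) / (1 - r)) (𝓝[<] 1) (𝓝 1) := by
  have hc := tendsto_one_sub_ofReal_nhdsLT_one.pow 2
  refine (by simpa using tendsto_const_nhds.sub (hq.mul hc) : Tendsto (fun r : ℝ =>
    1 - (f r - r) / (1 - (r : ℂ)) ^ 3 * (1 - (r : ℂ)) ^ 2) _ (𝓝 1)).congr' ?_
  filter_upwards [self_mem_nhdsWithin] with r hr1
  have := one_sub_ofReal_ne_zero hr1
  field_simp
  ring

lemma tendsto_norm_one_sub_div_one_sub :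
    Tendsto (fun r : ℝ => ‖1 - f r‖ / (1 - r)) (𝓝[<] 1) (𝓝 1) := by
  refine (by simpa using (tendsto_one_sub_div_one_sub hq).norm :
    Tendsto (fun r : ℝ => ‖(1 - f r) / (1 - r)‖) _ (𝓝 1)).congr' ?_
  filter_upwards [self_mem_nhdsWithin] with r hr1
  rw [norm_div, ← ofReal_one, ← ofReal_sub, norm_real, Real.norm_of_nonneg (sub_pos.2 hr1).le]

lemma tendsto_cayley_sub_cayley_div :
    Tendsto (fun r : ℝ => (cayley (f r) - cayley r) / (1 - r)) (𝓝[<] 1) (𝓝 0) := by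
  have hs := tendsto_one_sub_div_one_sub hq
  have hlim : Tendsto (fun r : ℝ => 2 * ((f r - r) / (1 - (r : ℂ)) ^ 3) / ((1 - f r) / (1 - r)))
      (𝓝[<] 1) (𝓝 (2 * 0 / 1)) := (hq.const_mul 2).div hs one_ne_zero
  rw [mul_zero, zero_div] at hlim
  refine hlim.congr' ?_
  filter_upwards [self_mem_nhdsWithin, hs.eventually_ne one_ne_zero] with r hr1 hfr
  have h1 := one_sub_ofReal_ne_zero hr1
  have h2 : 1 - f r ≠ 0 := (div_ne_zero_iff.1 hfr).1
  rw [cayley, cayley]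
  field_simp
  ring

end Radial

/-- Proposition 3.1 (one-dimensional Burns–Krantz): a holomorphic self-map `f` of the
unit disc with `f z = z + o(|z-1|^3)` as `z → 1` in the disc is the identity. -/
theorem burns_krantz_disc (f : ℂ → ℂ)
    (hf : DifferentiableOn ℂ f (ball (0 : ℂ) 1))
    (hmap : Set.MapsTo f (ball (0 : ℂ) 1) (ball (0 : ℂ) 1))
    (hasym : Tendsto (fun z : ℂ => (f z - z) / (‖z - 1‖ : ℂ) ^ 3)
      (nhdsWithin 1 (ball (0 : ℂ) 1)) (nhds 0)) :
    ∀ z ∈ ball (0 : ℂ) 1, f z = z := by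
  have hq := tendsto_div_one_sub_pow_nhdsLT_one (F := fun z => f z - z) hasym
  have hre : ∀ z ∈ ball (0 : ℂ) 1, 0 ≤ (cayley (f z) - cayley z).re := fun z hz => by
    simpa [re_cayley] using julia hf hmap (tendsto_norm_one_sub_div_one_sub hq) hz
  have hg := eqOn_zero_of_re_nonneg_of_tendsto
    ((differentiableOn_cayley.comp hf hmap).sub differentiableOn_cayley) hre
    (tendsto_cayley_sub_cayley_div hq)
  exact fun z hz => cayley_injOn (hmap hz) hz (sub_eq_zero.1 (hg hz))
end

section
/- Let g : Δ → ℂ be holomorphic with Re g(z) ≥ 0 for all z ∈ Δ, and let (z_k) be a sequence in Δ converging to 1 nontangentially such that Re g(z_k) = o(|z_k - 1|) as k → ∞ (i.e. Re g(z_k)/|z_k - 1| → 0). Then Re g(z) = 0 for every z ∈ Δ. -/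
open Metric Filter

/-! A Harnack inequality for `Re g` comes from the Schwarz lemma applied to the Cayley transform
`(g - g c) / (g + conj (g c))`, which maps the disc into the unit disc and vanishes at the centre.
At `z_k` it gives `Re g 0 · (1 - |z_k|) ≤ 2 Re g (z_k)`, so nontangential approach and
`Re g (z_k) = o(|z_k - 1|)` force `Re g 0 = 0`; at an arbitrary `w` it gives
`(1 - |w|) Re g w ≤ (1 + |w|) Re g 0 = 0`. -/

namespace Complex

open ComplexConjugate

theorem normSq_add_conj_eq_normSq_sub_add (a b : ℂ) :
    normSq (a + conj b) = normSq (a - b) + 4 * a.re * b.re := by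
  simp only [normSq_apply, add_re, add_im, sub_re, sub_im, conj_re, conj_im]
  ring

theorem norm_sub_lt_norm_add_conj {a b : ℂ} (ha : 0 < a.re) (hb : 0 < b.re) :
    ‖a - b‖ < ‖a + conj b‖ := by
  refine lt_of_pow_lt_pow_left₀ 2 (norm_nonneg _) ?_
  rw [Complex.sq_norm, Complex.sq_norm, normSq_add_conj_eq_normSq_sub_add]
  nlinarith [mul_pos ha hb]

theorem abs_re_sub_re_le_of_norm_sub_le {a b : ℂ} {r : ℝ} (hr₀ : 0 ≤ r) (hr₁ : r ≤ 1)
    (hab : 0 ≤ a.re + b.re) (h : ‖a - b‖ ≤ r * ‖a + conj b‖) :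
    |a.re - b.re| ≤ r * (a.re + b.re) := by
  have hsq := pow_le_pow_left₀ (norm_nonneg _) h 2
  rw [mul_pow, Complex.sq_norm, Complex.sq_norm] at hsq
  simp only [normSq_apply, add_re, add_im, sub_re, sub_im, conj_re, conj_im] at hsq
  refine abs_le_of_sq_le_sq ?_ (mul_nonneg hr₀ hab)
  nlinarith [mul_le_mul_of_nonneg_right (pow_le_one₀ hr₀ hr₁ (n := 2))
    (mul_self_nonneg (a.im - b.im))]

variable {g : ℂ → ℂ} {c w : ℂ} {R : ℝ}

theorem harnack_re_of_re_pos (hg : DifferentiableOn ℂ g (ball c R))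
    (hpos : ∀ z ∈ ball c R, 0 < (g z).re) (hw : w ∈ ball c R) :
    |(g w).re - (g c).re| ≤ dist w c / R * ((g w).re + (g c).re) := by
  have hR : 0 < R := pos_of_mem_ball hw
  have hc := hpos c (mem_ball_self hR)
  have hden : ∀ z ∈ ball c R, g z + conj (g c) ≠ 0 := fun z hz h => by
    have := congrArg re h
    simp only [add_re, conj_re, zero_re] at this
    linarith [hpos z hz]
  set ψ : ℂ → ℂ := fun z => (g z - g c) / (g z + conj (g c))
  have hψc : ψ c = 0 := by simp [ψ]
  have hmaps : Set.MapsTo ψ (ball c R) (closedBall (ψ c) 1) := fun z hz => by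
    rw [hψc, mem_closedBall_zero_iff, norm_div, div_le_one (norm_pos_iff.2 (hden z hz))]
    exact (norm_sub_lt_norm_add_conj (hpos z hz) hc).le
  have hschwarz : dist (ψ w) (ψ c) ≤ 1 / R * dist w c := dist_le_div_mul_dist_of_mapsTo_ball
    ((hg.sub_const _).div (hg.add_const _) hden) hmaps hw
  rw [hψc, dist_zero_right, norm_div, div_le_iff₀ (norm_pos_iff.2 (hden w hw)),
    one_div_mul_eq_div] at hschwarz
  exact abs_re_sub_re_le_of_norm_sub_le (by positivity)
    (div_le_one_of_le₀ (mem_ball.1 hw).le hR.le) (add_pos (hpos w hw) hc).le hschwarz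

/-- The Harnack inequality `(R - |w - c|) u(c) ≤ (R + |w - c|) u(w)` and its reverse, for the
nonnegative harmonic function `u = Re g`. -/
theorem harnack_re_of_re_nonneg (hg : DifferentiableOn ℂ g (ball c R))
    (hpos : ∀ z ∈ ball c R, 0 ≤ (g z).re) (hw : w ∈ ball c R) :
    |(g w).re - (g c).re| ≤ dist w c / R * ((g w).re + (g c).re) := by
  have hr₀ : 0 ≤ dist w c / R := div_nonneg dist_nonneg (pos_of_mem_ball hw).le
  have hr₁ : dist w c / R ≤ 1 := div_le_one_of_le₀ (mem_ball.1 hw).le (pos_of_mem_ball hw).le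
  refine le_of_forall_pos_le_add fun ε hε => ?_
  have hε' := harnack_re_of_re_pos (g := fun z => g z + (ε / 2 : ℝ)) (hg.add_const _)
    (fun z hz => by simpa using add_pos_of_nonneg_of_pos (hpos z hz) (half_pos hε)) hw
  simp only [add_re, ofReal_re, add_sub_add_right_eq_sub] at hε'
  nlinarith

end Complex

theorem hopf_lemma_step_general (g : ℂ → ℂ)
    (hg : DifferentiableOn ℂ g (ball (0 : ℂ) 1))
    (hpos : ∀ z ∈ ball (0 : ℂ) 1, 0 ≤ (g z).re)
    (z : ℕ → ℂ) (hz : ∀ k, z k ∈ ball (0 : ℂ) 1)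
    (hnontan : ∃ C > 0, ∀ k, ‖1 - z k‖ ≤ C * (1 - ‖z k‖))
    (hasym : Tendsto (fun k => (g (z k)).re / ‖z k - 1‖) atTop (nhds 0)) :
    ∀ w ∈ ball (0 : ℂ) 1, (g w).re = 0 := by
  have harnack : ∀ w ∈ ball (0 : ℂ) 1, |(g w).re - (g 0).re| ≤ ‖w‖ * ((g w).re + (g 0).re) :=
    fun w hw => by simpa using Complex.harnack_re_of_re_nonneg hg hpos hw
  obtain ⟨C, hC, hzC⟩ := hnontan
  have hbound : ∀ k, (g 0).re / (2 * C) ≤ (g (z k)).re / ‖z k - 1‖ := fun k => by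
    have hzk : ‖z k‖ < 1 := mem_ball_zero_iff.1 (hz k)
    have hdist : 0 < ‖z k - 1‖ := norm_pos_iff.2 (sub_ne_zero.2 fun h => by simp [h] at hzk)
    rw [div_le_div_iff₀ (by positivity) hdist, ← norm_neg, neg_sub]
    have hx := hpos (z k) (hz k)
    have hy := hpos 0 (mem_ball_self one_pos)
    nlinarith [(abs_le.1 (harnack (z k) (hz k))).1, mul_le_mul_of_nonneg_left (hzC k) hy,
      mul_nonneg (mul_nonneg hC.le hx) (sub_nonneg.2 hzk.le)]
  have hg₀ : (g 0).re ≤ 0 := by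
    simpa using (div_le_iff₀ (by positivity)).1 (ge_of_tendsto' hasym hbound)
  intro w hw
  have hw₁ : ‖w‖ < 1 := mem_ball_zero_iff.1 hw
  nlinarith [(abs_le.1 (harnack w hw)).2, hpos w hw,
    mul_nonpos_of_nonneg_of_nonpos (norm_nonneg w) hg₀]

/-- The Hopf-lemma step in the proof of Proposition 3.2: a holomorphic function `g`
on the unit disc with nonnegative real part whose real part is `o(|z_k - 1|)` along a
nontangential sequence `z_k → 1` has identically vanishing real part. -/
theorem hopf_lemma_step (g : ℂ → ℂ)
    (hg : DifferentiableOn ℂ g (ball (0 : ℂ) 1))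
    (hpos : ∀ z ∈ ball (0 : ℂ) 1, 0 ≤ (g z).re)
    (z : ℕ → ℂ) (hz : ∀ k, z k ∈ ball (0 : ℂ) 1)
    (hlim : Tendsto z atTop (nhds 1))
    (hnontan : ∃ C > 0, ∀ k, ‖1 - z k‖ ≤ C * (1 - ‖z k‖))
    (hasym : Tendsto (fun k => (g (z k)).re / ‖z k - 1‖) atTop (nhds 0)) :
    ∀ w ∈ ball (0 : ℂ) 1, (g w).re = 0 :=
  hopf_lemma_step_general g hg hpos z hz hnontan hasym
end

section
/- Let ν : ∂Δ → ℝ be a continuous real-valued function on the unit circle, and suppose there exists a function F, continuous on the closed unit disc and holomorphic on the open unit disc Δ, such that F(ζ) = ζ·ν(ζ) for every ζ ∈ ∂Δ. Then there exist λ ∈ ℂ and c ∈ ℝ such that ν(ζ) = Re(λζ + c) = Re(λζ) + c for all ζ ∈ ∂Δ. -/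
open Metric Filter MeasureTheory

private lemma intervalIntegral_conj' {f : ℝ → ℂ} {a b : ℝ} :
    (∫ x in a..b, (starRingEnd ℂ) (f x)) = (starRingEnd ℂ) (∫ x in a..b, f x) := by
  simp only [intervalIntegral, integral_conj, map_sub]

/-- The Fourier-series argument from the proof of Theorem 4.1: a continuous real
function `ν` on the unit circle such that `ζ ↦ ζ · ν ζ` extends holomorphically to the
disc is of the form `ν ζ = Re (λ ζ) + c`. -/
theorem circle_fourier_form (ν : ℂ → ℝ)
    (hν : ContinuousOn ν (sphere (0 : ℂ) 1))
    (F : ℂ → ℂ)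
    (hFcont : ContinuousOn F (closedBall (0 : ℂ) 1))
    (hFhol : DifferentiableOn ℂ F (ball (0 : ℂ) 1))
    (hFν : ∀ ζ ∈ sphere (0 : ℂ) 1, F ζ = ζ * (ν ζ : ℂ)) :
    ∃ (l : ℂ) (c : ℝ), ∀ ζ ∈ sphere (0 : ℂ) 1, ν ζ = (l * ζ).re + c := by
  haveI : Fact (0 < 2 * Real.pi) := ⟨Real.two_pi_pos⟩
  have hmem : ∀ θ : ℝ, Complex.exp (θ * Complex.I) ∈ sphere (0 : ℂ) 1 := by
    intro θ
    simp [mem_sphere_zero_iff_norm, Complex.norm_exp_ofReal_mul_I]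
  -- the boundary function as a periodic function on ℝ
  set f : ℝ → ℂ := fun θ => ((ν (Complex.exp (θ * Complex.I)) : ℝ) : ℂ) with hf
  have hper : Function.Periodic f (2 * Real.pi) := by
    intro θ
    have h : Complex.exp ((↑(θ + 2 * Real.pi) : ℂ) * Complex.I) =
        Complex.exp ((θ : ℂ) * Complex.I) := by
      push_cast
      rw [add_mul, Complex.exp_add, Complex.exp_two_pi_mul_I, mul_one]
    simp only [hf, h]
  have hcont : Continuous f := by
    refine Complex.continuous_ofReal.comp ?_
    exact hν.comp_continuous
      (Complex.continuous_exp.comp (Complex.continuous_ofReal.mul continuous_const)) hmem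
  have hgc : Continuous (hper.lift) := by
    exact hcont.quotient_liftOn' _
  set g : C(AddCircle (2 * Real.pi), ℂ) := ⟨hper.lift, hgc⟩ with hg
  have hglift : ∀ θ : ℝ, g (θ : AddCircle (2 * Real.pi)) = f θ := fun θ =>
    hper.lift_coe θ
  -- fourier monomials on this circle
  have hfour : ∀ (n : ℤ) (x : ℝ),
      (fourier n (x : AddCircle (2 * Real.pi)) : ℂ) =
        Complex.exp ((n : ℂ) * x * Complex.I) := by
    intro n x
    rw [fourier_coe_apply]
    congr 1
    have hπ : (Real.pi : ℂ) ≠ 0 := Complex.ofReal_ne_zero.mpr Real.pi_ne_zero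
    field_simp
    push_cast
    ring
  -- Cauchy's theorem: the moments of the boundary values of F vanish
  have key : ∀ k : ℕ,
      (∫ θ in (0:ℝ)..(2 * Real.pi),
        Complex.exp ((θ : ℂ) * Complex.I) ^ (k + 2) * f θ) = 0 := by
    intro k
    have hc : ContinuousOn (fun z : ℂ => F z * z ^ k) (closedBall (0 : ℂ) 1) :=
      hFcont.mul (continuous_pow k).continuousOn
    have hd : ∀ z ∈ ball (0 : ℂ) 1 \ (∅ : Set ℂ), DifferentiableAt ℂ (fun z : ℂ => F z * z ^ k) z := by
      intro z hz
      exact ((hFhol.differentiableAt (isOpen_ball.mem_nhds hz.1)).mul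
        (differentiableAt_pow k))
    have h0 : (∮ z in C((0:ℂ), 1), F z * z ^ k) = 0 :=
      Complex.circleIntegral_eq_zero_of_differentiable_on_off_countable zero_le_one
        Set.countable_empty hc hd
    rw [circleIntegral] at h0
    have heq : ∀ θ ∈ Set.uIcc (0:ℝ) (2 * Real.pi),
        deriv (circleMap 0 1) θ • (F (circleMap 0 1 θ) * circleMap 0 1 θ ^ k) =
          Complex.I * (Complex.exp ((θ : ℂ) * Complex.I) ^ (k + 2) * f θ) := by
      intro θ _
      have hcm : circleMap 0 1 θ = Complex.exp ((θ : ℂ) * Complex.I) := by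
        simp [circleMap]
      rw [deriv_circleMap, hcm]
      have hFb : F (Complex.exp ((θ : ℂ) * Complex.I)) =
          Complex.exp ((θ : ℂ) * Complex.I) * (ν (Complex.exp ((θ : ℂ) * Complex.I)) : ℂ) :=
        hFν _ (hmem θ)
      simp only [circleMap, zero_add, one_mul, smul_eq_mul, hFb, hf]
      ring
    rw [intervalIntegral.integral_congr heq, intervalIntegral.integral_const_mul] at h0
    rcases mul_eq_zero.mp h0 with h | h
    · exact absurd h Complex.I_ne_zero
    · exact h
  -- the fourier coefficients as interval integrals
  have hco : ∀ n : ℤ, fourierCoeff (⇑g) n = (1 / (2 * Real.pi) : ℝ) •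
      ∫ x in (0:ℝ)..(2 * Real.pi),
        Complex.exp (-(n : ℂ) * x * Complex.I) * f x := by
    intro n
    rw [fourierCoeff_eq_intervalIntegral (⇑g) n 0, zero_add]
    congr 1
    refine intervalIntegral.integral_congr fun x _ => ?_
    rw [hglift x, hfour (-n) x, smul_eq_mul]
    push_cast
    ring_nf
  -- coefficients vanish outside {-1, 0, 1}
  have hcoeff : ∀ n : ℤ, n ∉ ({-1, 0, 1} : Finset ℤ) → fourierCoeff (⇑g) n = 0 := by
    intro n hn
    have hn' : n ≤ -2 ∨ 2 ≤ n := by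
      simp only [Finset.mem_insert, Finset.mem_singleton] at hn
      push_neg at hn
      omega
    rcases hn' with h | h
    · -- n ≤ -2 : directly Cauchy
      set k : ℕ := (-n - 2).toNat with hk
      have hnk : -(n : ℂ) = ((k : ℕ) : ℂ) + 2 := by
        have : (-n : ℤ) = (k : ℤ) + 2 := by omega
        exact_mod_cast congrArg (fun m : ℤ => (m : ℂ)) this
      rw [hco n]
      have : (∫ x in (0:ℝ)..(2 * Real.pi),
          Complex.exp (-(n : ℂ) * x * Complex.I) * f x) = 0 := by
        rw [← key k]
        refine intervalIntegral.integral_congr fun x _ => ?_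
        rw [hnk]
        rw [show (((k : ℕ) : ℂ) + 2) * (x : ℂ) * Complex.I
            = ((k + 2 : ℕ) : ℂ) * ((x : ℂ) * Complex.I) by push_cast; ring,
          Complex.exp_nat_mul]
      rw [this, smul_zero]
    · -- 2 ≤ n : conjugate
      set k : ℕ := (n - 2).toNat with hk
      have hnk : (n : ℂ) = ((k : ℕ) : ℂ) + 2 := by
        have : (n : ℤ) = (k : ℤ) + 2 := by omega
        exact_mod_cast congrArg (fun m : ℤ => (m : ℂ)) this
      rw [hco n]
      have hconj : (∫ x in (0:ℝ)..(2 * Real.pi),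
          (starRingEnd ℂ) (Complex.exp (-(n : ℂ) * x * Complex.I) * f x)) = 0 := by
        rw [← key k]
        refine intervalIntegral.integral_congr fun x _ => ?_
        have h1 : (starRingEnd ℂ) (Complex.exp (-(n : ℂ) * x * Complex.I)) =
            Complex.exp ((n : ℂ) * x * Complex.I) := by
          rw [← Complex.exp_conj]
          congr 1
          simp [Complex.conj_I]
          try ring
        have h2 : (starRingEnd ℂ) (f x) = f x := Complex.conj_ofReal _
        rw [map_mul, h1, h2, hnk,
          show (((k : ℕ) : ℂ) + 2) * (x : ℂ) * Complex.I
            = ((k + 2 : ℕ) : ℂ) * ((x : ℂ) * Complex.I) by push_cast; ring,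
          Complex.exp_nat_mul]
      rw [intervalIntegral_conj'] at hconj
      have : (∫ x in (0:ℝ)..(2 * Real.pi),
          Complex.exp (-(n : ℂ) * x * Complex.I) * f x) = 0 := by
        have := congrArg (starRingEnd ℂ) hconj
        simpa using this
      rw [this, smul_zero]
  -- summability and pointwise Fourier expansion
  have hsum : Summable (fourierCoeff (⇑g)) :=
    summable_of_ne_finset_zero (s := ({-1, 0, 1} : Finset ℤ)) hcoeff
  set cneg : ℂ := fourierCoeff (⇑g) (-1) with hcneg
  set czero : ℂ := fourierCoeff (⇑g) 0 with hczero
  set cone : ℂ := fourierCoeff (⇑g) 1 with hcone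
  refine ⟨(starRingEnd ℂ) cneg + cone, czero.re, ?_⟩
  intro ζ hζ
  -- write ζ = exp(θ i)
  have habs : ‖ζ‖ = 1 := by
    simpa [mem_sphere_zero_iff_norm] using hζ
  set θ : ℝ := Complex.arg ζ with hθdef
  have hθ : Complex.exp ((θ : ℂ) * Complex.I) = ζ := by
    have := Complex.norm_mul_exp_arg_mul_I ζ
    rwa [habs, Complex.ofReal_one, one_mul] at this
  -- pointwise sum at θ
  have hps := has_pointwise_sum_fourier_series_of_summable (f := g) hsum
    (θ : AddCircle (2 * Real.pi))
  have hfin : HasSum (fun i : ℤ => fourierCoeff (⇑g) i • fourier i (θ : AddCircle (2 * Real.pi)))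
      (∑ i ∈ ({-1, 0, 1} : Finset ℤ),
        fourierCoeff (⇑g) i • fourier i (θ : AddCircle (2 * Real.pi))) :=
    hasSum_sum_of_ne_finset_zero fun i hi => by rw [hcoeff i hi, zero_smul]
  have hval : g (θ : AddCircle (2 * Real.pi)) =
      ∑ i ∈ ({-1, 0, 1} : Finset ℤ),
        fourierCoeff (⇑g) i • fourier i (θ : AddCircle (2 * Real.pi)) :=
    (hps.unique hfin)
  have hsum3 : (∑ i ∈ ({-1, 0, 1} : Finset ℤ),
      fourierCoeff (⇑g) i • fourier i (θ : AddCircle (2 * Real.pi))) =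
        cneg * Complex.exp (-(θ : ℂ) * Complex.I) + czero + cone * Complex.exp ((θ : ℂ) * Complex.I) := by
    rw [show ({-1, 0, 1} : Finset ℤ) = insert (-1) (insert 0 {1}) from rfl,
      Finset.sum_insert (by decide), Finset.sum_insert (by decide), Finset.sum_singleton]
    rw [hfour (-1) θ, hfour 0 θ, hfour 1 θ]
    simp only [smul_eq_mul, Int.cast_zero, zero_mul, Complex.exp_zero, mul_one,
      ← hcneg, ← hczero, ← hcone]
    push_cast
    ring_nf
  have hgν : g (θ : AddCircle (2 * Real.pi)) = ((ν ζ : ℝ) : ℂ) := by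
    rw [hglift θ]
    simp only [hf]
    rw [hθ]
  have hkey : ((ν ζ : ℝ) : ℂ) =
      cneg * Complex.exp (-(θ : ℂ) * Complex.I) + czero + cone * ζ := by
    rw [← hgν, hval, hsum3, hθ]
  -- take real parts
  have hre : ν ζ = (cneg * Complex.exp (-(θ : ℂ) * Complex.I)).re + czero.re + (cone * ζ).re := by
    have := congrArg Complex.re hkey
    simpa [Complex.add_re] using this
  have hconjζ : Complex.exp (-(θ : ℂ) * Complex.I) = (starRingEnd ℂ) ζ := by
    rw [← hθ, ← Complex.exp_conj]
    congr 1
    simp [Complex.conj_I]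
    try ring
  have hre2 : (cneg * Complex.exp (-(θ : ℂ) * Complex.I)).re = ((starRingEnd ℂ) cneg * ζ).re := by
    rw [hconjζ]
    have : (starRingEnd ℂ) cneg * ζ = (starRingEnd ℂ) (cneg * (starRingEnd ℂ) ζ) := by
      rw [map_mul, RingHomCompTriple.comp_apply]
      simp
    rw [this, Complex.conj_re]
  rw [hre, hre2, add_mul, Complex.add_re]
  ring
end

section
/- Let Ω ⊂ ℂ^N be a bounded convex open set. Let Φ be a map, continuous on the closed unit disc and holomorphic on the open unit disc Δ, with Φ(closure of Δ) contained in the closure of Ω. Suppose there is a continuous map Φ* : ∂Δ → ℂ^N such that: (i) there exists G, continuous on the closed unit disc and holomorphic on Δ, with G(ζ) = ζ·Φ*(ζ) for all ζ ∈ ∂Δ; and (ii) for every ζ ∈ ∂Δ and every w in the closure of Ω with w ≠ Φ(ζ), one has Re⟨Φ*(ζ), Φ(ζ) - w⟩ > 0, where ⟨ξ, v⟩ = Σ_{j=1}^N ξ_j v_j is the complex bilinear pairing. If Φ̃ : Δ → Ω is a holomorphic map satisfying Φ̃(ζ) = Φ(ζ) + o(|ζ - 1|³) as ζ → 1 in Δ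 (i.e. (Φ̃(ζ) - Φ(ζ))/|ζ - 1|³ → 0), then Φ̃(ζ) = Φ(ζ) for all ζ ∈ Δ. -/
/-!
Pair `Φ̃ - Φ` with the holomorphic extension `G` of `ζ Φ*` and divide by `(ζ - 1)²`. The
resulting holomorphic function `g` on the disc is `o(ζ - 1)` at `1` by the third-order contact,
while near any other boundary point `ζ` it is `|ζ - 1|⁻² ⟨Φ*(ζ), Φ(ζ) - Φ̃⟩ + o(1)`, whose real
part is nonnegative by the support condition. Hence `re g ≥ 0`, and a boundary Hopf lemma
(Harnack's inequality along the radius to `1`, then the minimum principle for `re g`) gives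
`g ≡ 0`. Consequently `⟨Φ*(ζ), Φ(ζ) - Φ̃⟩ → 0` at every boundary point; strict support makes
`Φ(ζ)` the only cluster value of `Φ̃` there, and the maximum principle gives `Φ̃ = Φ`.
-/

open Metric Filter Topology Set Asymptotics ComplexConjugate Complex

theorem Filter.Tendsto.zero_dotProduct_isBoundedUnder_le {α ι R : Type*} [Fintype ι]
    [NonUnitalSeminormedRing R] {l : Filter α} {a b : α → ι → R}
    (ha : Tendsto a l (𝓝 0)) (hb : IsBoundedUnder (· ≤ ·) l ((‖·‖) ∘ b)) :
    Tendsto (fun x => a x ⬝ᵥ b x) l (𝓝 0) := by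
  simpa [dotProduct] using tendsto_finsetSum Finset.univ fun i _ =>
    (tendsto_pi_nhds.1 ha i).zero_mul_isBoundedUnder_le
      (hb.mono_le (Eventually.of_forall fun x => norm_le_pi_norm (b x) i))

theorem DifferentiableOn.dotProduct {𝕜 E ι : Type*} [NontriviallyNormedField 𝕜] [Fintype ι]
    [NormedAddCommGroup E] [NormedSpace 𝕜 E] {a b : E → ι → 𝕜} {s : Set E}
    (ha : DifferentiableOn 𝕜 a s) (hb : DifferentiableOn 𝕜 b s) :
    DifferentiableOn 𝕜 (fun x => a x ⬝ᵥ b x) s :=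
  DifferentiableOn.fun_sum fun i _ => (differentiableOn_pi.1 ha i).mul (differentiableOn_pi.1 hb i)

theorem IsCompact.tendsto_nhds_of_tendsto_comp {α X Y : Type*} [TopologicalSpace X]
    [TopologicalSpace Y] [T2Space Y] {K : Set X} (hK : IsCompact K) {f : X → Y}
    (hf : Continuous f) {p : X} (hp : ∀ x ∈ K, f x = f p → x = p) {l : Filter α} {u : α → X}
    (hu : ∀ᶠ a in l, u a ∈ K) (hlim : Tendsto (f ∘ u) l (𝓝 (f p))) : Tendsto u l (𝓝 p) :=
  hK.tendsto_nhds_of_unique_mapClusterPt hu fun x hx hcl => hp x hx <|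
    eq_of_nhds_neBot <| (hcl.continuousAt_comp hf.continuousAt).neBot.mono (inf_le_inf_left _ hlim)

namespace Complex

variable {E : Type*} [NormedAddCommGroup E] [NormedSpace ℂ E]

theorem norm_le_of_forall_mem_sphere_eventually_norm_le {F : ℂ → E}
    (hF : DifferentiableOn ℂ F (ball 0 1)) {C : ℝ}
    (hC : ∀ ζ ∈ sphere (0 : ℂ) 1, ∀ᶠ z in 𝓝[ball 0 1] ζ, ‖F z‖ ≤ C) {z : ℂ}
    (hz : z ∈ ball (0 : ℂ) 1) : ‖F z‖ ≤ C := by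
  set W := interior {w | w ∈ ball (0 : ℂ) 1 → ‖F w‖ ≤ C}
  have hW : sphere (0 : ℂ) 1 ⊆ W := fun ζ hζ =>
    mem_interior_iff_mem_nhds.2 (eventually_nhdsWithin_iff.1 (hC ζ hζ))
  obtain ⟨r, hr1, hr⟩ : ∃ r < 1, closedBall (0 : ℂ) 1 \ W ⊆ ball 0 r :=
    exists_lt_subset_ball (isClosed_closedBall.sdiff isOpen_interior) fun w hw =>
      mem_ball_zero_iff.2 <| (mem_closedBall_zero_iff.1 hw.1).lt_of_ne fun h =>
        hw.2 (hW (mem_sphere_zero_iff_norm.2 h))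
  obtain ⟨R, hR, hR1⟩ := exists_between (max_lt hr1 (mem_ball_zero_iff.1 hz))
  have hR0 : 0 < R := (norm_nonneg z).trans_lt ((le_max_right _ _).trans_lt hR)
  refine norm_le_of_forall_mem_frontier_norm_le isBounded_ball
    (hF.diffContOnCl_ball (closedBall_subset_ball hR1)) (fun w hw => ?_)
    (subset_closure (mem_ball_zero_iff.2 ((le_max_right _ _).trans_lt hR)))
  rw [frontier_ball _ hR0.ne', mem_sphere_zero_iff_norm] at hw
  have hw1 : w ∈ ball (0 : ℂ) 1 := mem_ball_zero_iff.2 (hw.trans_lt hR1)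
  have hwW : w ∈ W := by
    by_contra hwW
    have := mem_ball_zero_iff.1 (hr ⟨ball_subset_closedBall hw1, hwW⟩)
    linarith [le_max_left r ‖z‖]
  exact interior_subset hwW hw1

theorem eqOn_zero_of_forall_mem_sphere_tendsto_zero {F : ℂ → E}
    (hF : DifferentiableOn ℂ F (ball 0 1))
    (h0 : ∀ ζ ∈ sphere (0 : ℂ) 1, Tendsto F (𝓝[ball 0 1] ζ) (𝓝 0)) :
    EqOn F 0 (ball 0 1) := fun z hz =>
  norm_le_zero_iff.1 <| le_of_forall_pos_le_add fun ε hε => by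
    rw [zero_add]
    exact norm_le_of_forall_mem_sphere_eventually_norm_le hF (fun ζ hζ =>
      (tendsto_zero_iff_norm_tendsto_zero.1 (h0 ζ hζ)).eventually (ge_mem_nhds hε)) hz

theorem re_nonneg_of_forall_mem_sphere_eventually {g : ℂ → ℂ}
    (hg : DifferentiableOn ℂ g (ball 0 1))
    (h : ∀ ζ ∈ sphere (0 : ℂ) 1, ∀ ε > 0, ∀ᶠ z in 𝓝[ball 0 1] ζ, -ε < (g z).re) {z : ℂ}
    (hz : z ∈ ball (0 : ℂ) 1) : 0 ≤ (g z).re := by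
  refine le_of_forall_pos_le_add fun ε hε => ?_
  have hexp := norm_le_of_forall_mem_sphere_eventually_norm_le hg.neg.cexp (C := Real.exp ε)
    (fun ζ hζ => (h ζ hζ ε hε).mono fun w hw => by
      rw [norm_exp, Pi.neg_apply, neg_re, Real.exp_le_exp]; linarith) hz
  rw [norm_exp, Pi.neg_apply, neg_re, Real.exp_le_exp] at hexp
  linarith

theorem normSq_add_conj (w c : ℂ) : normSq (w + conj c) = normSq (w - c) + 4 * w.re * c.re := by
  simp only [normSq_apply, add_re, add_im, sub_re, sub_im, conj_re, conj_im]
  ring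

theorem norm_sub_le_norm_add_conj {w c : ℂ} (hw : 0 ≤ w.re) (hc : 0 ≤ c.re) :
    ‖w - c‖ ≤ ‖w + conj c‖ := by
  rw [norm_def, norm_def, normSq_add_conj]
  exact Real.sqrt_le_sqrt (le_add_of_nonneg_right (by positivity))

theorem add_conj_ne_zero {w c : ℂ} (hw : 0 ≤ w.re) (hc : 0 < c.re) : w + conj c ≠ 0 := fun h => by
  have := congrArg re h
  rw [add_re, conj_re, zero_re] at this
  linarith

theorem eqOn_of_isPreconnected_of_isMinOn_re {g : ℂ → ℂ} {U : Set ℂ} {c : ℂ}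
    (hU : IsPreconnected U) (ho : IsOpen U) (hd : DifferentiableOn ℂ g U) (hc : c ∈ U)
    (hm : IsMinOn (re ∘ g) U c) : EqOn g (Function.const ℂ (g c)) U := by
  set k := fun z => g z - g c
  have hk : ∀ z ∈ U, 0 ≤ (k z).re := fun z hz => by
    simpa [k] using (hm hz : (g c).re ≤ (g z).re)
  have hne : ∀ z ∈ U, k z + 1 ≠ 0 := fun z hz => by
    simpa using add_conj_ne_zero (hk z hz) (c := 1) one_pos
  -- the Cayley transform of `k` maps `U` into the closed unit disc and sends `c` to `-1`
  set F := fun z => (k z - 1) / (k z + 1)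
  have hFc : ‖F c‖ = 1 := by simp [F, k]
  have hF : EqOn F (Function.const ℂ (F c)) U :=
    eqOn_of_isPreconnected_of_isMaxOn_norm hU ho
      (((hd.sub_const _).sub_const 1).div ((hd.sub_const _).add_const 1) hne) hc fun z hz => by
        change ‖F z‖ ≤ ‖F c‖
        rw [hFc, norm_div, div_le_one (norm_pos_iff.2 (hne z hz))]
        simpa using norm_sub_le_norm_add_conj (hk z hz) (c := 1) zero_le_one
  intro z hz
  have hFz := hF hz
  simp only [F, k, sub_self, Function.const_apply] at hFz ⊢
  rw [div_eq_iff (hne z hz)] at hFz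
  linear_combination hFz / 2

/-- Harnack's inequality for `re g`, in the form given by the Schwarz lemma applied to
`(g - g 0) / (g + conj (g 0))`. -/
theorem one_sub_norm_sq_mul_normSq_add_conj_le {g : ℂ → ℂ} (hg : DifferentiableOn ℂ g (ball 0 1))
    (hre : ∀ z ∈ ball (0 : ℂ) 1, 0 ≤ (g z).re) (h0 : 0 < (g 0).re) {z : ℂ}
    (hz : z ∈ ball (0 : ℂ) 1) :
    (1 - ‖z‖ ^ 2) * normSq (g z + conj (g 0)) ≤ 4 * (g z).re * (g 0).re := by
  have hne : ∀ w ∈ ball (0 : ℂ) 1, g w + conj (g 0) ≠ 0 := fun w hw =>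
    add_conj_ne_zero (hre w hw) h0
  have hschwarz : ‖(g z - g 0) / (g z + conj (g 0))‖ ≤ ‖z‖ :=
    norm_le_norm_of_mapsTo_ball ((hg.sub_const _).div (hg.add_const _) hne)
      (fun w hw => mem_closedBall_zero_iff.2 <| by
        rw [Pi.div_apply, norm_div, div_le_one (norm_pos_iff.2 (hne w hw))]
        exact norm_sub_le_norm_add_conj (hre w hw) h0.le)
      (by simp) (mem_ball_zero_iff.1 hz)
  rw [norm_div, div_le_iff₀ (norm_pos_iff.2 (hne z hz))] at hschwarz
  have hsq := pow_le_pow_left₀ (norm_nonneg _) hschwarz 2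
  rw [mul_pow, ← normSq_eq_norm_sq (g z - g 0), ← normSq_eq_norm_sq (g z + conj (g 0))] at hsq
  nlinarith [normSq_add_conj (g z) (g 0)]

theorem re_le_zero_of_re_nonneg_of_isLittleO {g : ℂ → ℂ} (hg : DifferentiableOn ℂ g (ball 0 1))
    (hre : ∀ z ∈ ball (0 : ℂ) 1, 0 ≤ (g z).re) (ho : g =o[𝓝[ball 0 1] 1] (· - 1)) :
    (g 0).re ≤ 0 := by
  refine not_lt.1 fun hpos => ?_
  have hrad : Tendsto (fun r : ℝ => (r : ℂ)) (𝓝[<] 1) (𝓝[ball 0 1] 1) := by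
    refine tendsto_nhdsWithin_iff.2 ⟨?_, ?_⟩
    · exact (continuous_ofReal.tendsto' 1 1 ofReal_one).mono_left nhdsWithin_le_nhds
    · filter_upwards [Ioo_mem_nhdsLT (zero_lt_one' ℝ)] with r hr
      simpa [abs_of_pos hr.1] using hr.2
  have hbound : ∀ᶠ r : ℝ in 𝓝[<] 1,
      (1 + r) * normSq (g r + conj (g 0)) ≤ 4 * (g 0).re * (‖g r‖ / ‖(r : ℂ) - 1‖) := by
    filter_upwards [Ioo_mem_nhdsLT (zero_lt_one' ℝ)] with r ⟨hr0, hr1⟩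
    have hH := one_sub_norm_sq_mul_normSq_add_conj_le hg hre hpos (z := r)
      (by simpa [abs_of_pos hr0] using hr1)
    have hr : ‖((r - 1 : ℝ) : ℂ)‖ = 1 - r := by
      rw [norm_real, Real.norm_of_nonpos (by linarith), neg_sub]
    rw [norm_real, Real.norm_of_nonneg hr0.le] at hH
    rw [← ofReal_one, ← ofReal_sub, hr, mul_div_assoc', le_div_iff₀ (by linarith)]
    nlinarith [re_le_norm (g r)]
  have hlim : Tendsto g (𝓝[ball 0 1] 1) (𝓝 0) :=
    ho.trans_tendsto (tendsto_sub_nhds_zero_iff.2 nhdsWithin_le_nhds)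
  have hlhs : Tendsto (fun r : ℝ => (1 + r) * normSq (g r + conj (g 0))) (𝓝[<] 1)
      (𝓝 ((1 + 1) * normSq (0 + conj (g 0)))) :=
    ((tendsto_const_nhds.add tendsto_id).mono_left nhdsWithin_le_nhds).mul
      ((continuous_normSq.tendsto _).comp ((hlim.comp hrad).add_const _))
  have hrhs : Tendsto (fun r : ℝ => 4 * (g 0).re * (‖g r‖ / ‖(r : ℂ) - 1‖)) (𝓝[<] 1)
      (𝓝 (4 * (g 0).re * 0)) :=
    tendsto_const_nhds.mul (ho.comp_tendsto hrad).norm_norm.tendsto_div_nhds_zero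
  have hc := le_of_tendsto_of_tendsto hlhs hrhs hbound
  rw [zero_add, normSq_conj, mul_zero] at hc
  have : g 0 = 0 := normSq_eq_zero.1 (by linarith [normSq_nonneg (g 0)])
  simp [this] at hpos

theorem eqOn_zero_of_re_nonneg_of_isLittleO {g : ℂ → ℂ} (hg : DifferentiableOn ℂ g (ball 0 1))
    (hre : ∀ z ∈ ball (0 : ℂ) 1, 0 ≤ (g z).re) (ho : g =o[𝓝[ball 0 1] 1] (· - 1)) :
    EqOn g 0 (ball 0 1) := by
  have hre0 : (g 0).re = 0 :=
    (re_le_zero_of_re_nonneg_of_isLittleO hg hre ho).antisymm (hre 0 (mem_ball_self one_pos))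
  have hconst := eqOn_of_isPreconnected_of_isMinOn_re (convex_ball (0 : ℂ) 1).isPreconnected
    isOpen_ball hg (mem_ball_self one_pos) fun z hz =>
      show (g 0).re ≤ (g z).re from hre0 ▸ hre z hz
  have : (𝓝[ball (0 : ℂ) 1] 1).NeBot :=
    mem_closure_iff_nhdsWithin_neBot.1 (by simp [closure_ball _ one_ne_zero])
  have hg0 : g 0 = 0 := tendsto_nhds_unique
    (tendsto_const_nhds.congr' <| eventually_nhdsWithin_of_forall fun z hz => (hconst hz).symm)
    (ho.trans_tendsto (tendsto_sub_nhds_zero_iff.2 nhdsWithin_le_nhds))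
  exact fun z hz => (hconst hz).trans hg0

-- at `ζ = 1` both sides are `0`, since `0⁻¹ = 0`
theorem inv_sub_one_sq_mul_self_of_norm_eq_one {ζ : ℂ} (hζ : ‖ζ‖ = 1) :
    ((ζ - 1) ^ 2)⁻¹ * ζ = -(((normSq (ζ - 1))⁻¹ : ℝ) : ℂ) := by
  rcases eq_or_ne ζ 1 with rfl | hζ1
  · simp
  have hconj : ζ * conj ζ = 1 := by rw [mul_conj, normSq_eq_norm_sq, hζ]; simp
  have hne : ζ - 1 ≠ 0 := sub_ne_zero.2 hζ1
  have hne' : conj ζ - 1 ≠ 0 := by simpa using (map_ne_zero (starRingEnd ℂ)).2 hne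
  rw [ofReal_inv, ← mul_conj, map_sub, map_one]
  field_simp
  linear_combination hconj

end Complex

section StationaryDisc

variable {N : ℕ} {Ω : Set (Fin N → ℂ)} {Φ Φt : ℂ → Fin N → ℂ}

theorem tendsto_dotProduct_sub_dotProduct_nhdsWithin_ball (hΩ : Bornology.IsBounded Ω)
    (hΦmap : MapsTo Φ (closedBall 0 1) (closure Ω)) (hΦtmap : MapsTo Φt (ball 0 1) Ω)
    {a : ℂ → Fin N → ℂ} {ζ : ℂ} (ha : ContinuousWithinAt a (closedBall 0 1) ζ)
    (hΦ : ContinuousWithinAt Φ (closedBall 0 1) ζ) :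
    Tendsto (fun z => a z ⬝ᵥ (Φt z - Φ z) - a ζ ⬝ᵥ (Φt z - Φ ζ)) (𝓝[ball 0 1] ζ) (𝓝 0) := by
  have hbdd : IsBoundedUnder (· ≤ ·) (𝓝[ball 0 1] ζ) ((‖·‖) ∘ fun z => Φt z - Φ z) :=
    isBoundedUnder_of_eventually_le (a := diam (closure Ω)) <|
      eventually_nhdsWithin_of_forall fun z hz => by
        rw [Function.comp_apply, ← dist_eq_norm]
        exact dist_le_diam_of_mem hΩ.closure (subset_closure (hΦtmap hz))
          (hΦmap (ball_subset_closedBall hz))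
  have hmoving := Tendsto.zero_dotProduct_isBoundedUnder_le
    (tendsto_sub_nhds_zero_iff.2 (ha.mono ball_subset_closedBall)) hbdd
  have hfixed : Tendsto (fun z => a ζ ⬝ᵥ (Φ z - Φ ζ)) (𝓝[ball 0 1] ζ) (𝓝 0) := by
    simpa only [Function.comp_def, id_eq, dotProduct_zero] using
      (((continuous_const (y := a ζ)).dotProduct continuous_id).tendsto 0).comp
        (tendsto_sub_nhds_zero_iff.2 (hΦ.mono ball_subset_closedBall))
  have := hmoving.sub hfixed
  rw [sub_zero] at this
  refine this.congr fun z => ?_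
  simp only [sub_dotProduct, dotProduct_sub]
  ring

theorem eventually_neg_lt_re_inv_sub_one_sq_mul_dotProduct (hΩ : Bornology.IsBounded Ω)
    (hΦmap : MapsTo Φ (closedBall 0 1) (closure Ω)) (hΦtmap : MapsTo Φt (ball 0 1) Ω)
    {G : ℂ → Fin N → ℂ} {ξ : Fin N → ℂ} {ζ : ℂ} (hζ : ζ ∈ sphere (0 : ℂ) 1) (hζ1 : ζ ≠ 1)
    (hG : ContinuousWithinAt G (closedBall 0 1) ζ) (hΦ : ContinuousWithinAt Φ (closedBall 0 1) ζ)
    (hGζ : G ζ = ζ • ξ) (hsupp : ∀ w ∈ closure Ω, 0 ≤ (ξ ⬝ᵥ (Φ ζ - w)).re) {ε : ℝ}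
    (hε : 0 < ε) :
    ∀ᶠ z in 𝓝[ball 0 1] ζ, -ε < (((z - 1) ^ 2)⁻¹ * G z ⬝ᵥ (Φt z - Φ z)).re := by
  set a : ℂ → Fin N → ℂ := fun z => ((z - 1) ^ 2)⁻¹ • G z
  have ha : ContinuousWithinAt a (closedBall 0 1) ζ :=
    (((continuousWithinAt_id.sub continuousWithinAt_const).pow 2).inv₀
      (pow_ne_zero 2 (sub_ne_zero.2 hζ1))).smul hG
  have hlim := (continuous_re.tendsto 0).comp
    (tendsto_dotProduct_sub_dotProduct_nhdsWithin_ball hΩ hΦmap hΦtmap ha hΦ)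
  filter_upwards [hlim.eventually (lt_mem_nhds (neg_lt_zero.2 hε)), eventually_mem_nhdsWithin]
    with z hz hzball
  have hζa : a ζ ⬝ᵥ (Φt z - Φ ζ) = ((normSq (ζ - 1))⁻¹ : ℝ) * (ξ ⬝ᵥ (Φ ζ - Φt z)) := by
    simp only [a, hGζ, smul_smul, smul_dotProduct, smul_eq_mul,
      inv_sub_one_sq_mul_self_of_norm_eq_one (mem_sphere_zero_iff_norm.1 hζ)]
    rw [← neg_sub (Φ ζ), dotProduct_neg]
    ring
  have hfixed : 0 ≤ (a ζ ⬝ᵥ (Φt z - Φ ζ)).re := by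
    rw [hζa, re_ofReal_mul]
    exact mul_nonneg (inv_nonneg.2 (normSq_nonneg _)) (hsupp _ (subset_closure (hΦtmap hzball)))
  simp only [Function.comp_apply, sub_re, a, smul_dotProduct, smul_eq_mul] at hz hfixed ⊢
  linarith

theorem isLittleO_inv_sub_one_sq_mul_dotProduct {l : Filter ℂ} {G D : ℂ → Fin N → ℂ}
    {G₁ : Fin N → ℂ} (hG : Tendsto G l (𝓝 G₁))
    (hD : Tendsto (fun z => (‖z - 1‖ ^ 3)⁻¹ • D z) l (𝓝 0)) :
    (fun z => ((z - 1) ^ 2)⁻¹ * G z ⬝ᵥ D z) =o[l] (· - 1) := by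
  refine (isLittleO_iff_tendsto fun z hz => by simp [hz]).2 ?_
  have hD' : Tendsto (fun z => ((z - 1) ^ 3)⁻¹ • D z) l (𝓝 0) := by
    refine tendsto_zero_iff_norm_tendsto_zero.2 ((tendsto_zero_iff_norm_tendsto_zero.1 hD).congr
      fun z => ?_)
    simp [norm_smul]
  have := ((continuous_fst.dotProduct continuous_snd).tendsto (G₁, 0)).comp (hG.prodMk_nhds hD')
  rw [Function.comp_def, dotProduct_zero] at this
  refine this.congr fun z => ?_
  rw [dotProduct_smul, smul_eq_mul, pow_succ, mul_inv, div_eq_mul_inv]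
  ring

theorem tendsto_nhdsWithin_ball_of_dotProduct_eq_zero (hΩ : Bornology.IsBounded Ω)
    (hΦmap : MapsTo Φ (closedBall 0 1) (closure Ω)) (hΦtmap : MapsTo Φt (ball 0 1) Ω)
    {G : ℂ → Fin N → ℂ} {ξ : Fin N → ℂ} {ζ : ℂ} (hζ0 : ζ ≠ 0)
    (hG : ContinuousWithinAt G (closedBall 0 1) ζ) (hΦ : ContinuousWithinAt Φ (closedBall 0 1) ζ)
    (hGζ : G ζ = ζ • ξ) (hsupp : ∀ w ∈ closure Ω, w ≠ Φ ζ → 0 < (ξ ⬝ᵥ (Φ ζ - w)).re)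
    (hpair : ∀ z ∈ ball 0 1, G z ⬝ᵥ (Φt z - Φ z) = 0) :
    Tendsto Φt (𝓝[ball 0 1] ζ) (𝓝 (Φ ζ)) := by
  have hlim := tendsto_dotProduct_sub_dotProduct_nhdsWithin_ball hΩ hΦmap hΦtmap hG hΦ
  have hlim' : Tendsto (fun z => ξ ⬝ᵥ (Φ ζ - Φt z)) (𝓝[ball 0 1] ζ) (𝓝 (ξ ⬝ᵥ (Φ ζ - Φ ζ))) := by
    rw [show ξ ⬝ᵥ (Φ ζ - Φ ζ) = ζ⁻¹ * 0 by simp]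
    refine (hlim.const_mul ζ⁻¹).congr' (eventually_nhdsWithin_of_forall fun z hz => ?_)
    rw [hpair z hz, hGζ, smul_dotProduct, smul_eq_mul, ← neg_sub (Φ ζ), dotProduct_neg]
    simp only [zero_sub, mul_neg, neg_neg, inv_mul_cancel_left₀ hζ0]
  exact hΩ.isCompact_closure.tendsto_nhds_of_tendsto_comp (f := fun w => ξ ⬝ᵥ (Φ ζ - w))
    (continuous_const.dotProduct (continuous_const.sub continuous_id))
    (fun w hw hξw => by_contra fun hne => (hsupp w hw hne).ne' (by
      rw [hξw, sub_self, dotProduct_zero, zero_re]))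
    (eventually_nhdsWithin_of_forall fun z hz => subset_closure (hΦtmap hz)) hlim'

end StationaryDisc

theorem stationary_disc_uniqueness_general (N : ℕ)
    (Ω : Set (Fin N → ℂ)) (hΩbdd : Bornology.IsBounded Ω)
    (Φ : ℂ → (Fin N → ℂ))
    (hΦcont : ContinuousOn Φ (closedBall (0 : ℂ) 1))
    (hΦhol : DifferentiableOn ℂ Φ (ball (0 : ℂ) 1))
    (hΦmap : Set.MapsTo Φ (closedBall (0 : ℂ) 1) (closure Ω))
    (Φs : ℂ → (Fin N → ℂ))
    (hlift : ∃ G : ℂ → (Fin N → ℂ), ContinuousOn G (closedBall (0 : ℂ) 1) ∧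
      DifferentiableOn ℂ G (ball (0 : ℂ) 1) ∧
      ∀ ζ ∈ sphere (0 : ℂ) 1, G ζ = ζ • Φs ζ)
    (hsupport : ∀ ζ ∈ sphere (0 : ℂ) 1, ∀ w ∈ closure Ω, w ≠ Φ ζ →
      0 < (∑ j, Φs ζ j * (Φ ζ j - w j)).re)
    (Φt : ℂ → (Fin N → ℂ))
    (hΦthol : DifferentiableOn ℂ Φt (ball (0 : ℂ) 1))
    (hΦtmap : Set.MapsTo Φt (ball (0 : ℂ) 1) Ω)
    (hasym : Tendsto (fun ζ : ℂ => (‖ζ - 1‖ ^ 3)⁻¹ • (Φt ζ - Φ ζ))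
      (nhdsWithin 1 (ball (0 : ℂ) 1)) (nhds 0)) :
    ∀ ζ ∈ ball (0 : ℂ) 1, Φt ζ = Φ ζ := by
  obtain ⟨G, hGcont, hGhol, hGlift⟩ := hlift
  have hsub : ∀ z ∈ ball (0 : ℂ) 1, (z - 1) ^ 2 ≠ 0 := fun z hz =>
    pow_ne_zero 2 (sub_ne_zero.2 (ne_of_mem_of_not_mem hz (by simp)))
  set g : ℂ → ℂ := fun z => ((z - 1) ^ 2)⁻¹ * G z ⬝ᵥ (Φt z - Φ z)
  have hg : DifferentiableOn ℂ g (ball 0 1) := ((differentiableOn_id.sub_const 1).pow 2).inv hsub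
    |>.mul (hGhol.dotProduct (hΦthol.sub hΦhol))
  have hgo : g =o[𝓝[ball 0 1] 1] (· - 1) := isLittleO_inv_sub_one_sq_mul_dotProduct
    ((hGcont 1 (by simp)).mono ball_subset_closedBall) hasym
  have hgre : ∀ z ∈ ball (0 : ℂ) 1, 0 ≤ (g z).re := fun z =>
    re_nonneg_of_forall_mem_sphere_eventually hg fun ζ hζ ε hε => by
      rcases eq_or_ne ζ 1 with rfl | hζ1
      · exact ((continuous_re.tendsto 0).comp (hgo.trans_tendsto
          (tendsto_sub_nhds_zero_iff.2 nhdsWithin_le_nhds))).eventually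
            (lt_mem_nhds (neg_lt_zero.2 hε))
      · exact eventually_neg_lt_re_inv_sub_one_sq_mul_dotProduct hΩbdd hΦmap hΦtmap hζ hζ1
          (hGcont ζ (sphere_subset_closedBall hζ)) (hΦcont ζ (sphere_subset_closedBall hζ))
          (hGlift ζ hζ) (fun w hw => (eq_or_ne w (Φ ζ)).elim (fun h => by simp [h])
            fun h => (hsupport ζ hζ w hw h).le) hε
  have hpair : ∀ z ∈ ball (0 : ℂ) 1, G z ⬝ᵥ (Φt z - Φ z) = 0 := fun z hz => by
    simpa [g, hsub z hz] using eqOn_zero_of_re_nonneg_of_isLittleO hg hgre hgo hz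
  refine fun z hz => sub_eq_zero.1 (eqOn_zero_of_forall_mem_sphere_tendsto_zero
    (hΦthol.sub hΦhol) (fun ζ hζ => ?_) hz)
  have hΦζ := hΦcont ζ (sphere_subset_closedBall hζ)
  rw [← sub_self (Φ ζ)]
  exact (tendsto_nhdsWithin_ball_of_dotProduct_eq_zero hΩbdd hΦmap hΦtmap
    (ne_zero_of_mem_sphere one_ne_zero ⟨ζ, hζ⟩) (hGcont ζ (sphere_subset_closedBall hζ)) hΦζ
    (hGlift ζ hζ) (hsupport ζ hζ) hpair).sub (hΦζ.mono ball_subset_closedBall)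

/-- Proposition 6.1 (boundary uniqueness for stationary discs of strongly convex
domains): if `Φ` is a stationary disc of a bounded convex domain `Ω` with lift `Φ*`
that is strictly supporting along `Φ(∂Δ)`, and `Φ̃ : Δ → Ω` is holomorphic with
`Φ̃ ζ = Φ ζ + o(|ζ - 1|³)` as `ζ → 1` in `Δ`, then `Φ̃ ≡ Φ`. -/
theorem stationary_disc_uniqueness (N : ℕ)
    (Ω : Set (Fin N → ℂ)) (hΩopen : IsOpen Ω) (hΩbdd : Bornology.IsBounded Ω)
    (hΩconv : Convex ℝ Ω)
    (Φ : ℂ → (Fin N → ℂ))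
    (hΦcont : ContinuousOn Φ (closedBall (0 : ℂ) 1))
    (hΦhol : DifferentiableOn ℂ Φ (ball (0 : ℂ) 1))
    (hΦmap : Set.MapsTo Φ (closedBall (0 : ℂ) 1) (closure Ω))
    (Φs : ℂ → (Fin N → ℂ))
    (hΦscont : ContinuousOn Φs (sphere (0 : ℂ) 1))
    (hlift : ∃ G : ℂ → (Fin N → ℂ), ContinuousOn G (closedBall (0 : ℂ) 1) ∧
      DifferentiableOn ℂ G (ball (0 : ℂ) 1) ∧
      ∀ ζ ∈ sphere (0 : ℂ) 1, G ζ = ζ • Φs ζ)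
    (hsupport : ∀ ζ ∈ sphere (0 : ℂ) 1, ∀ w ∈ closure Ω, w ≠ Φ ζ →
      0 < (∑ j, Φs ζ j * (Φ ζ j - w j)).re)
    (Φt : ℂ → (Fin N → ℂ))
    (hΦthol : DifferentiableOn ℂ Φt (ball (0 : ℂ) 1))
    (hΦtmap : Set.MapsTo Φt (ball (0 : ℂ) 1) Ω)
    (hasym : Tendsto (fun ζ : ℂ => (‖ζ - 1‖ ^ 3)⁻¹ • (Φt ζ - Φ ζ))
      (nhdsWithin 1 (ball (0 : ℂ) 1)) (nhds 0)) :
    ∀ ζ ∈ ball (0 : ℂ) 1, Φt ζ = Φ ζ :=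
  stationary_disc_uniqueness_general N Ω hΩbdd Φ hΦcont hΦhol hΦmap Φs hlift hsupport Φt hΦthol
    hΦtmap hasym
end
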